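/- For n ≥ 1 define Â_n(z) = ((1 + i c_1)/(2z))·[R_n(z) + ((1 - i c_1)/(2 d_1))·(z - 1)·Q_n(z)]. Then Â_n is a polynomial of degree n - 1 with leading coefficient ∏_{k=1}^n (1 + i c_k); moreover, denoting by z_{n,1}, ..., z_{n,n} the n simple unimodular zeros of R_n, the numbers λ̂_{n,j} = Â_n(z_{n,j}) / R_n'(z_{n,j}) are strictly positive real numbers with Σ_{j=1}^n λ̂_{n,j} = 1, and one has the partial fraction decomposition Â_n(z)/R_n(z) = Σ_{j=1}^n λ̂_{n,j}/(z - z_{n,j}). -/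

import Mathlib

open Polynomial MeasureTheory Finset
open scoped ComplexConjugate

/-- The polynomials `R_n` defined by the three term recurrence
`R_{n+1}(z) = [(1+i c_{n+1}) z + (1-i c_{n+1})] R_n(z) - 4 d_{n+1} z R_{n-1}(z)`. -/
noncomputable def Rpoly (c d : ℕ → ℝ) : ℕ → Polynomial ℂ
  | 0 => 1
  | 1 => C (1 + Complex.I * (c 1 : ℂ)) * X + C (1 - Complex.I * (c 1 : ℂ))
  | (n + 2) =>
      (C (1 + Complex.I * (c (n + 2) : ℂ)) * X + C (1 - Complex.I * (c (n + 2) : ℂ))) *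
          Rpoly c d (n + 1)
        - C (4 * (d (n + 2) : ℂ)) * X * Rpoly c d n

/-- The polynomials `Q_n` satisfying the same recurrence with `Q_0 = 0`, `Q_1 = 2 d_1`. -/
noncomputable def Qpoly (c d : ℕ → ℝ) : ℕ → Polynomial ℂ
  | 0 => 0
  | 1 => C (2 * (d 1 : ℂ))
  | (n + 2) =>
      (C (1 + Complex.I * (c (n + 2) : ℂ)) * X + C (1 - Complex.I * (c (n + 2) : ℂ))) *
          Qpoly c d (n + 1)
        - C (4 * (d (n + 2) : ℂ)) * X * Qpoly c d n


/-- `g` is a parameter sequence for the sequence `d_1, d_2, …`: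
`0 ≤ g_0 < 1`, `0 < g_n < 1` for `n ≥ 1`, and `d_n = (1 - g_{n-1}) g_n` for `n ≥ 1`. -/
def IsParamSeq (d g : ℕ → ℝ) : Prop :=
  0 ≤ g 0 ∧ g 0 < 1 ∧ (∀ n, 1 ≤ n → 0 < g n ∧ g n < 1) ∧
    ∀ n, 1 ≤ n → d n = (1 - g (n - 1)) * g n

/-- `d_1, d_2, …` is a positive chain sequence. -/
def IsPositiveChainSeq (d : ℕ → ℝ) : Prop := ∃ g, IsParamSeq d g

/-!
On the unit circle `R_n(e^{iθ}) = e^{inθ/2} f_n(θ)` with `f_n` real (`trigR`), obeying a real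
three-term recurrence. The chain sequence makes `f_n(0) = R_n(1)` positive and `d_k > 0` for
`k ≥ 2`, and a Sturm-type induction shows that `f_n` has `n` zeros in `(0, 2π)`, which separate
gaps on which `f_n` alternates in sign, while `f_{n-1}` alternates in sign at them. Since
`R_n(0) = κ Q_n(0)` with `κ = (1 - i c_1)/(2 d_1)`, `Â_n` is a polynomial, and at a zero
`z = e^{it}` of `R_n` the Casorati determinant
`R_n Q_{n-1} - Q_n R_{n-1} = -2 d_1 ∏_{k=2}^n 4 d_k z^{n-1}` gives
`λ̂ = -(1 + c_1²) ∏_{k=2}^n 4 d_k sin(t/2) / (f_{n-1}(t) f_n'(t))`, positive by the sign pattern.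
As `Â_n` has degree `n - 1` and the leading coefficient of `R_n`, Lagrange interpolation at the
zeros of `R_n` yields the partial fractions and `∑ λ̂ = 1`.
-/

namespace Polynomial

variable {F : Type*} [Field F] {n : ℕ} {z : Fin n → F}

theorem eq_C_leadingCoeff_mul_nodal {p : F[X]} (hz : Function.Injective z)
    (hdeg : p.natDegree = n) (hroot : ∀ i, p.IsRoot (z i)) :
    p = C p.leadingCoeff * Lagrange.nodal univ z := by
  rcases eq_or_ne p 0 with rfl | hp
  · simp
  have hle : univ.val.map z ≤ p.roots := by
    rw [Multiset.le_iff_subset (univ.nodup.map hz)]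
    intro w hw
    obtain ⟨i, -, rfl⟩ := Multiset.mem_map.1 hw
    exact (mem_roots hp).2 (hroot i)
  have hroots : univ.val.map z = p.roots :=
    Multiset.eq_of_le_of_card_le hle (by simpa [hdeg] using p.card_roots')
  have hcard : Multiset.card p.roots = p.natDegree := by simp [← hroots, hdeg]
  conv_lhs => rw [← C_leadingCoeff_mul_prod_multiset_X_sub_C hcard, ← hroots, Multiset.map_map]
  rfl

theorem eval_derivative_C_mul_nodal (a : F) (i : Fin n) :
    (derivative (C a * Lagrange.nodal univ z)).eval (z i) =
      a * ∏ j ∈ univ.erase i, (z i - z j) := by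
  rw [derivative_C_mul, eval_C_mul, Lagrange.eval_nodal_derivative_eval_node_eq (mem_univ i),
    Lagrange.eval_nodal]

theorem sum_eval_div_eval_derivative {A : F[X]} (hz : Function.Injective z) (hA : A.degree < n)
    (a : F) :
    ∑ i, A.eval (z i) / (derivative (C a * Lagrange.nodal univ z)).eval (z i) =
      A.coeff (n - 1) / a := by
  have := Lagrange.coeff_eq_sum (s := univ) (hz.injOn) (P := A) (by simpa using hA)
  simp only [card_univ, Fintype.card_fin] at this
  simp only [this, eval_derivative_C_mul_nodal, sum_div]
  refine sum_congr rfl fun i _ => ?_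
  ring

theorem eval_div_eval_eq_sum {A : F[X]} (hz : Function.Injective z) (hA : A.degree < n) (a : F)
    {w : F} (hw : ∀ i, w ≠ z i) :
    A.eval w / (C a * Lagrange.nodal univ z).eval w =
      ∑ i, A.eval (z i) / (derivative (C a * Lagrange.nodal univ z)).eval (z i) / (w - z i) := by
  have hnodal : (Lagrange.nodal univ z).eval w ≠ 0 :=
    Lagrange.eval_nodal_not_at_node fun i _ => hw i
  conv_lhs => rw [Lagrange.eq_interpolate (f := A) (s := univ) hz.injOn (by simpa using hA)]
  rw [Lagrange.eval_interpolate_not_at_node _ fun i _ => hw i, eval_C_mul, mul_comm a,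
    mul_div_mul_left _ _ hnodal, sum_div]
  refine sum_congr rfl fun i _ => ?_
  rw [eval_derivative_C_mul_nodal, Lagrange.nodalWeight, prod_inv_distrib]
  ring

end Polynomial

theorem Finset.prod_Icc_one_eq_mul_prod_Icc_two {M : Type*} [CommMonoid M] (f : ℕ → M) (n : ℕ) :
    ∏ k ∈ Icc 1 (n + 1), f k = f 1 * ∏ k ∈ Icc 2 (n + 1), f k := by
  rw [← insert_Icc_add_one_left_eq_Icc (by omega : 1 ≤ n + 1), prod_insert (by simp)]
  rfl

theorem HasDerivAt.nonpos_of_pos_left {f : ℝ → ℝ} {f' a b : ℝ} (hf : HasDerivAt f f' b)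
    (hb : f b = 0) (hab : a < b) (hpos : ∀ x ∈ Set.Ioo a b, 0 < f x) : f' ≤ 0 := by
  refine le_of_tendsto hf.tendsto_slope_zero_left ?_
  filter_upwards [Ioo_mem_nhdsLT (sub_neg.2 hab)] with t ht
  rw [hb, sub_zero, smul_eq_mul]
  exact (mul_neg_of_neg_of_pos (inv_lt_zero.2 ht.2)
    (hpos _ ⟨by linarith [ht.1], by linarith [ht.2]⟩)).le

theorem exists_mem_uIcc_eq_zero_of_mul_nonpos {f : ℝ → ℝ} {a b : ℝ}
    (hf : ContinuousOn f (Set.uIcc a b)) (h : f a * f b ≤ 0) : ∃ x ∈ Set.uIcc a b, f x = 0 :=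
  intermediate_value_uIcc hf <| by
    rcases mul_nonpos_iff.1 h with h | h
    · exact Set.mem_uIcc.2 (Or.inr ⟨h.2, h.1⟩)
    · exact Set.mem_uIcc.2 (Or.inl ⟨h.1, h.2⟩)

theorem uIcc_subset_Ioo_insert {a b p x : ℝ} (hp : p ∈ Set.Icc a b) (hx : x ∈ Set.Ioo a b) :
    Set.uIcc x p ⊆ insert p (Set.Ioo a b) := by
  intro y hy
  rcases eq_or_ne y p with rfl | hyp
  · exact Set.mem_insert _ _
  rw [Set.mem_uIcc] at hy
  refine Or.inr ⟨?_, ?_⟩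
  · rcases hy with hy | hy
    · exact hx.1.trans_le hy.1
    · exact hp.1.trans_lt (hy.1.lt_of_ne' hyp)
  · rcases hy with hy | hy
    · exact (hy.2.lt_of_ne hyp).trans_le hp.2
    · exact hy.2.trans_lt hx.2

theorem mul_pos_of_forall_ne_zero_Ioo {F : ℝ → ℝ} {a b p x : ℝ}
    (hF : ContinuousOn F (Set.Icc a b)) (hp : p ∈ Set.Icc a b) (hx : x ∈ Set.Ioo a b)
    (hFp : F p ≠ 0) (hno : ∀ y ∈ Set.Ioo a b, F y ≠ 0) : 0 < F x * F p := by
  by_contra! hle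
  obtain ⟨y, hy, hy0⟩ := exists_mem_uIcc_eq_zero_of_mul_nonpos
    (hF.mono (Set.uIcc_subset_Icc (Set.Ioo_subset_Icc_self hx) hp)) hle
  rcases uIcc_subset_Ioo_insert hp hx hy with rfl | hy
  exacts [hFp hy0, hno y hy hy0]

theorem injOn_exp_mul_I :
    Set.InjOn (fun t : ℝ => Complex.exp (t * Complex.I)) (Set.Ico 0 (2 * Real.pi)) :=
  Subtype.val_injective.comp_injOn (Circle.exp_injOn_Ico (by simp))

namespace IsParamSeq

variable {a g : ℕ → ℝ}

theorem lt_one (hg : IsParamSeq a g) : ∀ n, g n < 1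
  | 0 => hg.2.1
  | n + 1 => (hg.2.2.1 (n + 1) (by omega)).2

theorem succ_pos (hg : IsParamSeq a g) (n : ℕ) : 0 < g (n + 1) :=
  (hg.2.2.1 (n + 1) (by omega)).1

theorem eq_succ (hg : IsParamSeq a g) (n : ℕ) : a (n + 1) = (1 - g n) * g (n + 1) :=
  hg.2.2.2 (n + 1) (by omega)

theorem pos (hg : IsParamSeq a g) (n : ℕ) : 0 < a (n + 1) := by
  rw [hg.eq_succ]
  exact mul_pos (sub_pos.2 (hg.lt_one n)) (hg.succ_pos n)

theorem pos_of_recurrence (hg : IsParamSeq a g) {u : ℕ → ℝ} (h0 : u 0 = 1) (h1 : u 1 = 2)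
    (hrec : ∀ n, u (n + 2) = 2 * u (n + 1) - 4 * a (n + 1) * u n) (n : ℕ) : 0 < u n := by
  suffices h : ∀ n, 0 < u n ∧ 2 * (1 - g n) * u n ≤ u (n + 1) from (h n).1
  intro n
  induction n with
  | zero => exact ⟨by rw [h0]; norm_num, by rw [h0, h1]; linarith [hg.1]⟩
  | succ n ih =>
    have hpos : 0 < u (n + 1) :=
      lt_of_lt_of_le (mul_pos (by linarith [hg.lt_one n]) ih.1) ih.2
    refine ⟨hpos, ?_⟩
    rw [hrec, hg.eq_succ]
    nlinarith [ih.2, hg.succ_pos n]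

end IsParamSeq

section ThreeTermRecurrence

variable (a b e : ℂ) (p q : ℂ[X])

theorem natDegree_linear_mul_sub_le :
    ((C a * X + C b) * p - C e * X * q).natDegree ≤ max p.natDegree q.natDegree + 1 := by
  have hlin : (C a * X + C b).natDegree ≤ 1 := by compute_degree
  have hX : (C e * X).natDegree ≤ 1 := by compute_degree
  refine (natDegree_sub_le _ _).trans (max_le ?_ ?_)
  · exact natDegree_mul_le.trans (by omega)
  · exact natDegree_mul_le.trans (by omega)

theorem coeff_linear_mul_sub_succ (k : ℕ) :
    ((C a * X + C b) * p - C e * X * q).coeff (k + 1) =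
      a * p.coeff k + b * p.coeff (k + 1) - e * q.coeff k := by
  rw [coeff_sub, add_mul, coeff_add, mul_assoc, mul_assoc, coeff_C_mul, coeff_C_mul, coeff_C_mul,
    coeff_X_mul, coeff_X_mul]

theorem eval_zero_linear_mul_sub :
    ((C a * X + C b) * p - C e * X * q).eval 0 = b * p.eval 0 := by
  simp

end ThreeTermRecurrence

section RecurrenceFacts

variable (c d : ℕ → ℝ)

theorem one_add_I_mul_ne_zero (x : ℝ) : (1 : ℂ) + Complex.I * x ≠ 0 := by
  intro h
  simpa using congrArg Complex.re h

theorem natDegree_Rpoly_le : ∀ n, (Rpoly c d n).natDegree ≤ n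
  | 0 => by simp [Rpoly]
  | 1 => by rw [Rpoly]; compute_degree
  | n + 2 => by
    have := natDegree_Rpoly_le n
    have := natDegree_Rpoly_le (n + 1)
    rw [Rpoly]
    exact (natDegree_linear_mul_sub_le ..).trans (by omega)

theorem natDegree_Qpoly_le : ∀ n, (Qpoly c d n).natDegree ≤ n - 1
  | 0 => by simp [Qpoly]
  | 1 => by rw [Qpoly]; exact (natDegree_C _).le
  | n + 2 => by
    have := natDegree_Qpoly_le n
    have := natDegree_Qpoly_le (n + 1)
    rw [Qpoly]
    exact (natDegree_linear_mul_sub_le ..).trans (by omega)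

theorem coeff_Qpoly_self : ∀ n, (Qpoly c d n).coeff n = 0
  | 0 => by simp [Qpoly]
  | n + 1 => coeff_eq_zero_of_natDegree_lt ((natDegree_Qpoly_le c d (n + 1)).trans_lt (by omega))

theorem coeff_Rpoly_self : ∀ n, (Rpoly c d n).coeff n = ∏ k ∈ Icc 1 n, (1 + Complex.I * (c k : ℂ))
  | 0 => by simp [Rpoly]
  | 1 => by simp [Rpoly, coeff_C, coeff_one]
  | n + 2 => by
    rw [Rpoly, coeff_linear_mul_sub_succ, coeff_Rpoly_self (n + 1),
      coeff_eq_zero_of_natDegree_lt ((natDegree_Rpoly_le c d (n + 1)).trans_lt (by omega)),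
      coeff_eq_zero_of_natDegree_lt ((natDegree_Rpoly_le c d n).trans_lt (by omega)),
      prod_Icc_succ_top (by omega : 1 ≤ n + 2)]
    ring

theorem coeff_Qpoly_succ_self : ∀ n, (Qpoly c d (n + 1)).coeff n =
    2 * (d 1 : ℂ) * ∏ k ∈ Icc 2 (n + 1), (1 + Complex.I * (c k : ℂ))
  | 0 => by simp [Qpoly]
  | n + 1 => by
    rw [Qpoly, coeff_linear_mul_sub_succ, coeff_Qpoly_succ_self n, coeff_Qpoly_self,
      coeff_Qpoly_self, prod_Icc_succ_top (by omega : 2 ≤ n + 2)]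
    ring

theorem eval_zero_Rpoly : ∀ n, (Rpoly c d n).eval 0 = ∏ k ∈ Icc 1 n, (1 - Complex.I * (c k : ℂ))
  | 0 => by simp [Rpoly]
  | 1 => by simp [Rpoly]
  | n + 2 => by
    rw [Rpoly, eval_zero_linear_mul_sub, eval_zero_Rpoly (n + 1),
      prod_Icc_succ_top (by omega : 1 ≤ n + 2)]
    ring

theorem eval_zero_Qpoly : ∀ n, (Qpoly c d (n + 1)).eval 0 =
    2 * (d 1 : ℂ) * ∏ k ∈ Icc 2 (n + 1), (1 - Complex.I * (c k : ℂ))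
  | 0 => by simp [Qpoly]
  | n + 1 => by
    rw [Qpoly, eval_zero_linear_mul_sub, eval_zero_Qpoly n,
      prod_Icc_succ_top (by omega : 2 ≤ n + 2)]
    ring

theorem natDegree_Rpoly (n : ℕ) : (Rpoly c d n).natDegree = n :=
  le_antisymm (natDegree_Rpoly_le c d n) <| le_natDegree_of_ne_zero <| by
    rw [coeff_Rpoly_self]
    exact prod_ne_zero_iff.2 fun k _ => one_add_I_mul_ne_zero (c k)

theorem leadingCoeff_Rpoly (n : ℕ) :
    (Rpoly c d n).leadingCoeff = ∏ k ∈ Icc 1 n, (1 + Complex.I * (c k : ℂ)) := by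
  rw [leadingCoeff, natDegree_Rpoly, coeff_Rpoly_self]

theorem Rpoly_ne_zero (n : ℕ) : Rpoly c d n ≠ 0 := by
  rw [← leadingCoeff_ne_zero, leadingCoeff_Rpoly]
  exact prod_ne_zero_iff.2 fun k _ => one_add_I_mul_ne_zero (c k)

theorem Rpoly_mul_Qpoly_sub_Qpoly_mul_Rpoly : ∀ n,
    Rpoly c d (n + 1) * Qpoly c d n - Qpoly c d (n + 1) * Rpoly c d n =
      -C ((2 * d 1 * ∏ k ∈ Icc 2 (n + 1), 4 * d k : ℝ) : ℂ) * X ^ n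
  | 0 => by simp [Rpoly, Qpoly]
  | n + 1 => by
    have ih := Rpoly_mul_Qpoly_sub_Qpoly_mul_Rpoly n
    rw [Rpoly, Qpoly, prod_Icc_succ_top (by omega : 2 ≤ n + 2)]
    push_cast at ih ⊢
    simp only [map_mul, show n + 1 + 1 = n + 2 from rfl] at ih ⊢
    linear_combination (C 4 * C (d (n + 2) : ℂ) * X) * ih

end RecurrenceFacts

section Ahat

variable (c d : ℕ → ℝ)

noncomputable def Bpoly (n : ℕ) : ℂ[X] :=
  C (1 + Complex.I * (c 1 : ℂ)) *
    (Rpoly c d n + C ((1 - Complex.I * (c 1 : ℂ)) / (2 * (d 1 : ℂ))) * (X - C 1) * Qpoly c d n)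

-- `divX` silently drops the constant coefficient; it vanishes for `n ≥ 1` (`coeff_zero_Bpoly`).
noncomputable def Ahat (n : ℕ) : ℂ[X] := C 2⁻¹ * (Bpoly c d n).divX

variable {d}

theorem coeff_zero_Bpoly (hd1 : d 1 ≠ 0) (n : ℕ) : (Bpoly c d (n + 1)).coeff 0 = 0 := by
  have hd1' : (d 1 : ℂ) ≠ 0 := by exact_mod_cast hd1
  rw [coeff_zero_eq_eval_zero, Bpoly]
  simp only [eval_mul, eval_add, eval_C, eval_sub, eval_X, zero_sub, eval_zero_Rpoly,
    eval_zero_Qpoly, prod_Icc_one_eq_mul_prod_Icc_two]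
  field_simp
  ring

theorem natDegree_Bpoly_le (n : ℕ) : (Bpoly c d (n + 1)).natDegree ≤ n + 1 := by
  have hQ := natDegree_Qpoly_le c d (n + 1)
  have hlin : (C ((1 - Complex.I * (c 1 : ℂ)) / (2 * (d 1 : ℂ))) * (X - C 1)).natDegree ≤ 1 := by
    compute_degree
  rw [Bpoly]
  refine (natDegree_C_mul_le _ _).trans <|
    (natDegree_add_le _ _).trans (max_le (natDegree_Rpoly_le c d _) ?_)
  exact natDegree_mul_le.trans (by omega)

theorem coeff_Bpoly_self (hd1 : d 1 ≠ 0) (n : ℕ) :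
    (Bpoly c d (n + 1)).coeff (n + 1) = 2 * ∏ k ∈ Icc 1 (n + 1), (1 + Complex.I * (c k : ℂ)) := by
  have hd1' : (d 1 : ℂ) ≠ 0 := by exact_mod_cast hd1
  rw [Bpoly, coeff_C_mul, coeff_add, mul_assoc, coeff_C_mul, mul_comm (X - C 1),
    coeff_mul_X_sub_C, coeff_Rpoly_self, coeff_Qpoly_succ_self, coeff_Qpoly_self,
    prod_Icc_one_eq_mul_prod_Icc_two]
  field_simp
  ring

theorem C_two_mul_X_mul_Ahat (hd1 : d 1 ≠ 0) (n : ℕ) :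
    C 2 * X * Ahat c d (n + 1) = Bpoly c d (n + 1) := by
  have h := X_mul_divX_add (Bpoly c d (n + 1))
  rw [coeff_zero_Bpoly c hd1, map_zero, add_zero] at h
  calc C 2 * X * Ahat c d (n + 1) = C (2 * 2⁻¹) * (X * (Bpoly c d (n + 1)).divX) := by
        rw [Ahat, C_mul]; ring
    _ = Bpoly c d (n + 1) := by norm_num [h]

theorem coeff_Ahat (k n : ℕ) : (Ahat c d n).coeff k = (Bpoly c d n).coeff (k + 1) / 2 := by
  rw [Ahat, coeff_C_mul, coeff_divX, inv_mul_eq_div]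

theorem coeff_Ahat_self (hd1 : d 1 ≠ 0) (n : ℕ) :
    (Ahat c d (n + 1)).coeff n = ∏ k ∈ Icc 1 (n + 1), (1 + Complex.I * (c k : ℂ)) := by
  rw [coeff_Ahat, coeff_Bpoly_self c hd1]
  ring

theorem natDegree_Ahat (hd1 : d 1 ≠ 0) (n : ℕ) : (Ahat c d (n + 1)).natDegree = n := by
  refine natDegree_eq_of_le_of_coeff_ne_zero ?_ ?_
  · rw [Ahat]
    refine (natDegree_C_mul_le _ _).trans ?_
    rw [natDegree_divX_eq_natDegree_tsub_one]
    exact Nat.sub_le_of_le_add (natDegree_Bpoly_le c n)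
  · rw [coeff_Ahat_self c hd1]
    exact prod_ne_zero_iff.2 fun k _ => one_add_I_mul_ne_zero (c k)

theorem leadingCoeff_Ahat (hd1 : d 1 ≠ 0) (n : ℕ) :
    (Ahat c d (n + 1)).leadingCoeff = ∏ k ∈ Icc 1 (n + 1), (1 + Complex.I * (c k : ℂ)) := by
  rw [leadingCoeff, natDegree_Ahat c hd1, coeff_Ahat_self c hd1]

end Ahat

noncomputable def trigR (c d : ℕ → ℝ) : ℕ → ℝ → ℝ
  | 0, _ => 1
  | 1, θ => 2 * (Real.cos (θ / 2) - c 1 * Real.sin (θ / 2))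
  | n + 2, θ => 2 * (Real.cos (θ / 2) - c (n + 2) * Real.sin (θ / 2)) * trigR c d (n + 1) θ
      - 4 * d (n + 2) * trigR c d n θ

section UnitCircle

open Complex

variable (c d : ℕ → ℝ)

theorem exp_mul_I_eq_sq (θ : ℝ) : exp (θ * I) = exp ((θ / 2 : ℝ) * I) ^ 2 := by
  rw [← exp_nat_mul]
  push_cast
  ring_nf

theorem exp_mul_I_sub_one (θ : ℝ) :
    exp (θ * I) - 1 = exp ((θ / 2 : ℝ) * I) * (2 * I * (Real.sin (θ / 2) : ℂ)) := by
  rw [exp_mul_I_eq_sq]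
  simp only [exp_mul_I, ofReal_sin]
  linear_combination sin_sq_add_cos_sq ((θ / 2 : ℝ) : ℂ) - sin ((θ / 2 : ℝ) : ℂ) ^ 2 * I_sq

theorem linear_eval_exp (a θ : ℝ) :
    (1 + I * a) * exp (θ * I) + (1 - I * a) =
      exp ((θ / 2 : ℝ) * I) * ((2 * (Real.cos (θ / 2) - a * Real.sin (θ / 2)) : ℝ) : ℂ) := by
  rw [exp_mul_I_eq_sq]
  simp only [exp_mul_I, ofReal_mul, ofReal_sub, ofReal_ofNat, ofReal_cos, ofReal_sin]
  set s := sin ((θ / 2 : ℝ) : ℂ)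
  set k := cos ((θ / 2 : ℝ) : ℂ)
  linear_combination (I * a - 1) * sin_sq_add_cos_sq ((θ / 2 : ℝ) : ℂ) +
    (2 * a * k * s + s ^ 2 + I * a * s ^ 2) * I_sq

theorem eval_exp_Rpoly (θ : ℝ) : ∀ n,
    (Rpoly c d n).eval (exp (θ * I)) = exp ((θ / 2 : ℝ) * I) ^ n * trigR c d n θ
  | 0 => by simp [Rpoly, trigR]
  | 1 => by simp only [Rpoly, trigR, eval_add, eval_mul, eval_C, eval_X, linear_eval_exp, pow_one]
  | n + 2 => by
    simp only [Rpoly, trigR, eval_sub, eval_mul, eval_add, eval_C, eval_X]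
    rw [linear_eval_exp, eval_exp_Rpoly θ n, eval_exp_Rpoly θ (n + 1), exp_mul_I_eq_sq θ]
    push_cast
    ring

theorem differentiable_trigR : ∀ n, Differentiable ℝ (trigR c d n)
  | 0 => by simp only [trigR]; fun_prop
  | 1 => by simp only [trigR]; fun_prop
  | n + 2 => by
    have := differentiable_trigR n
    have := differentiable_trigR (n + 1)
    simp only [trigR]
    fun_prop

theorem trigR_two_pi : ∀ n, trigR c d n (2 * Real.pi) = (-1) ^ n * trigR c d n 0
  | 0 => by simp [trigR]
  | 1 => by simp [trigR, mul_div_cancel_left₀ _ (two_ne_zero' ℝ)]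
  | n + 2 => by
    simp only [trigR, mul_div_cancel_left₀ _ (two_ne_zero' ℝ), zero_div, Real.cos_pi,
      Real.sin_pi, Real.cos_zero, Real.sin_zero, trigR_two_pi n, trigR_two_pi (n + 1)]
    ring

theorem trigR_zero_pos {g : ℕ → ℝ} (hg : IsParamSeq (fun n => d (n + 1)) g) (n : ℕ) :
    0 < trigR c d n 0 :=
  hg.pos_of_recurrence (u := fun n => trigR c d n 0) rfl (by simp [trigR])
    (fun n => by simp [trigR]) n

theorem I_mul_exp_mul_derivative_eval_exp {n : ℕ} {θ : ℝ} (hθ : trigR c d n θ = 0) :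
    I * exp (θ * I) * (derivative (Rpoly c d n)).eval (exp (θ * I)) =
      exp ((θ / 2 : ℝ) * I) ^ n * ((deriv (trigR c d n) θ : ℝ) : ℂ) := by
  have hlhs : HasDerivAt (fun t : ℝ => (Rpoly c d n).eval (exp (t * I)))
      ((derivative (Rpoly c d n)).eval (exp (θ * I)) * (exp (θ * I) * I)) θ := by
    have hexp : HasDerivAt (fun w : ℂ => exp (w * I)) (exp (θ * I) * I) θ := by
      simpa using ((hasDerivAt_id (θ : ℂ)).mul_const I).cexp
    exact ((Polynomial.hasDerivAt _ _).comp (θ : ℂ) hexp).comp_ofReal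
  have hphase : DifferentiableAt ℝ (fun t : ℝ => exp ((t / 2 : ℝ) * I) ^ n) θ := by fun_prop
  have hrhs := hphase.hasDerivAt.mul ((differentiable_trigR c d n θ).hasDerivAt.ofReal_comp)
  simp only [hθ, ofReal_zero, mul_zero, zero_add] at hrhs
  simp only [eval_exp_Rpoly] at hlhs
  linear_combination hlhs.unique hrhs

end UnitCircle

section Zeros

open Real

variable (c d : ℕ → ℝ)

theorem card_le_of_trigR_eq_zero {n : ℕ} {s : Finset ℝ} (hs : ↑s ⊆ Set.Ico 0 (2 * π))
    (hzero : ∀ x ∈ s, trigR c d n x = 0) : s.card ≤ n := by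
  classical
  rw [← card_image_of_injOn (injOn_exp_mul_I.mono hs), ← natDegree_Rpoly c d n]
  refine card_le_degree_of_subset_roots fun w hw => ?_
  obtain ⟨x, hx, rfl⟩ := mem_image.1 hw
  rw [mem_roots (Rpoly_ne_zero c d n), IsRoot, eval_exp_Rpoly, hzero x hx, Complex.ofReal_zero,
    mul_zero]

theorem exists_eq_of_trigR_eq_zero {n : ℕ} {θ : ℕ → ℝ} (hθ : StrictMonoOn θ (Set.Iic (n + 1)))
    (h0 : θ 0 = 0) (hlast : θ (n + 1) = 2 * π) (hroot : ∀ j < n, trigR c d n (θ (j + 1)) = 0)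
    {y : ℝ} (hy : y ∈ Set.Ioo 0 (2 * π)) (hy0 : trigR c d n y = 0) : ∃ j < n, y = θ (j + 1) := by
  classical
  by_contra! hne
  have hinj : Set.InjOn (fun j => θ (j + 1)) ↑(range n) := fun i hi j hj hij => by
    simp only [coe_range, Set.mem_Iio] at hi hj
    simpa using hθ.injOn (by simp; omega) (by simp; omega) hij
  have hcard := card_le_of_trigR_eq_zero c d (n := n)
    (s := insert y ((range n).image fun j => θ (j + 1))) ?_ ?_
  · rw [card_insert_of_notMem, card_image_of_injOn hinj, card_range] at hcard
    · omega
    · simp only [mem_image, mem_range, not_exists, not_and]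
      exact fun j hj h => hne j hj h.symm
  · simp only [coe_insert, coe_image, coe_range, Set.insert_subset_iff, Set.image_subset_iff]
    refine ⟨Set.Ioo_subset_Ico_self hy, fun j hj => ?_⟩
    simp only [Set.mem_Iio] at hj
    rw [Set.mem_preimage, ← h0, ← hlast]
    exact ⟨(hθ (by simp) (by simp; omega) (by omega)).le,
      hθ (by simp; omega) (by simp) (by omega)⟩
  · simp only [mem_insert, mem_image, mem_range]
    rintro x (rfl | ⟨j, hj, rfl⟩)
    exacts [hy0, hroot j hj]

/-- `θ 1 < ⋯ < θ n` are the zeros of `trigR c d n` in `(0, 2π)`, framed by `θ 0 = 0` and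
`θ (n + 1) = 2π`. -/
structure Interlacing (c d : ℕ → ℝ) (n : ℕ) (θ : ℕ → ℝ) : Prop where
  zero : θ 0 = 0
  last : θ (n + 1) = 2 * π
  lt_succ : ∀ j ≤ n, θ j < θ (j + 1)
  root : ∀ j < n, trigR c d n (θ (j + 1)) = 0
  sign : ∀ j ≤ n, ∀ x ∈ Set.Ioo (θ j) (θ (j + 1)), 0 < (-1) ^ j * trigR c d n x
  sign_prev : ∀ j < n, 0 < (-1) ^ j * trigR c d (n - 1) (θ (j + 1))

namespace Interlacing

variable {c d : ℕ → ℝ} {n : ℕ} {θ : ℕ → ℝ}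

theorem strictMonoOn (h : Interlacing c d n θ) : StrictMonoOn θ (Set.Iic (n + 1)) :=
  strictMonoOn_Iic_of_lt_succ fun j hj => h.lt_succ j (Nat.lt_succ_iff.1 hj)

theorem mem_Ioo (h : Interlacing c d n θ) {j : ℕ} (hj : j < n) :
    θ (j + 1) ∈ Set.Ioo 0 (2 * π) := by
  rw [← h.zero, ← h.last]
  exact ⟨h.strictMonoOn (by simp) (by simp; omega) (by omega),
    h.strictMonoOn (by simp; omega) (by simp) (by omega)⟩

theorem injective_exp (h : Interlacing c d n θ) :
    Function.Injective fun j : Fin n => Complex.exp (θ (j + 1) * Complex.I) := fun i j hij => by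
  have := injOn_exp_mul_I (Set.Ioo_subset_Ico_self (h.mem_Ioo i.2))
    (Set.Ioo_subset_Ico_self (h.mem_Ioo j.2)) hij
  exact Fin.ext (by simpa using h.strictMonoOn.injOn (by simp) (by simp) this)

theorem Rpoly_eq (h : Interlacing c d n θ) :
    Rpoly c d n = C (∏ k ∈ Icc 1 n, (1 + Complex.I * (c k : ℂ))) *
      Lagrange.nodal univ (fun j : Fin n => Complex.exp (θ (j + 1) * Complex.I)) := by
  rw [← leadingCoeff_Rpoly c d n]
  refine eq_C_leadingCoeff_mul_nodal h.injective_exp (natDegree_Rpoly c d n) fun j => ?_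
  rw [IsRoot, eval_exp_Rpoly, h.root j j.2, Complex.ofReal_zero, mul_zero]

theorem exists_eq_exp_of_root (h : Interlacing c d n θ) {w : ℂ} (hw : (Rpoly c d n).eval w = 0) :
    ∃ j : Fin n, w = Complex.exp (θ (j + 1) * Complex.I) := by
  rw [h.Rpoly_eq, eval_C_mul, Lagrange.eval_nodal] at hw
  obtain ⟨j, -, hj⟩ := prod_eq_zero_iff.1 ((mul_eq_zero.1 hw).resolve_left
    (prod_ne_zero_iff.2 fun k _ => one_add_I_mul_ne_zero (c k)))
  exact ⟨j, sub_eq_zero.1 hj⟩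

theorem eval_derivative_ne_zero (h : Interlacing c d n θ) (j : Fin n) :
    (derivative (Rpoly c d n)).eval (Complex.exp (θ (j + 1) * Complex.I)) ≠ 0 := by
  rw [h.Rpoly_eq,
    eval_derivative_C_mul_nodal (z := fun j : Fin n => Complex.exp (θ (j + 1) * Complex.I))]
  refine mul_ne_zero (prod_ne_zero_iff.2 fun k _ => one_add_I_mul_ne_zero (c k))
    (prod_ne_zero_iff.2 fun i hi => sub_ne_zero.2 fun hji => ?_)
  exact (mem_erase.1 hi).1 (h.injective_exp hji).symm

/-- At an interior node `trigR (n + 1) = -4 d_{n+1} trigR (n - 1)`, so the signs alternate. -/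
theorem node_sign {g : ℕ → ℝ} (hg : IsParamSeq (fun n => d (n + 1)) g)
    (h : Interlacing c d n θ) {k : ℕ} (hk : k ≤ n + 1) :
    0 < (-1) ^ k * trigR c d (n + 1) (θ k) := by
  rcases Nat.eq_zero_or_pos k with rfl | hk0
  · simpa [h.zero] using trigR_zero_pos c d hg (n + 1)
  rcases hk.eq_or_lt with rfl | hkn
  · rw [h.last, trigR_two_pi, ← mul_assoc, ← pow_add, Even.neg_one_pow ⟨_, rfl⟩, one_mul]
    exact trigR_zero_pos c d hg (n + 1)
  obtain ⟨j, rfl⟩ : ∃ j, k = j + 1 := ⟨k - 1, by omega⟩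
  obtain ⟨m, rfl⟩ : ∃ m, n = m + 1 := ⟨n - 1, by omega⟩
  have hprev := h.sign_prev j (by omega)
  have hd : 0 < d (m + 2) := hg.pos m
  rw [trigR, h.root j (by omega)]
  simp only [add_tsub_cancel_right] at hprev
  rw [pow_succ]
  nlinarith

theorem exists_root_between {g : ℕ → ℝ} (hg : IsParamSeq (fun n => d (n + 1)) g)
    (h : Interlacing c d n θ) {j : ℕ} (hj : j ≤ n) :
    ∃ x ∈ Set.Ioo (θ j) (θ (j + 1)), trigR c d (n + 1) x = 0 := by
  have hj0 := h.node_sign hg (k := j) (by omega)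
  have hj1 := h.node_sign hg (k := j + 1) (by omega)
  have hsq : ((-1 : ℝ) ^ j) * (-1) ^ j = 1 := by rw [← mul_pow]; norm_num
  rw [pow_succ] at hj1
  obtain ⟨x, hx, hx0⟩ := exists_mem_uIcc_eq_zero_of_mul_nonpos
    (differentiable_trigR c d (n + 1)).continuous.continuousOn (a := θ j) (b := θ (j + 1))
    (by nlinarith)
  rw [Set.uIcc_of_le (h.lt_succ j hj).le] at hx
  refine ⟨x, ⟨hx.1.lt_of_ne ?_, hx.2.lt_of_ne ?_⟩, hx0⟩ <;> rintro rfl <;> simp_all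

/-- On a gap of new nodes `θ'` the function `trigR (n + 1)` has no zero, so it keeps the sign it
has at the old node `θ k` in the closure of that gap. -/
theorem sign_succ {g : ℕ → ℝ} (hg : IsParamSeq (fun n => d (n + 1)) g) (h : Interlacing c d n θ)
    {θ' : ℕ → ℝ} (hθ' : StrictMonoOn θ' (Set.Iic (n + 2))) (h0 : θ' 0 = 0)
    (hlast : θ' (n + 2) = 2 * π) (hroot : ∀ j < n + 1, trigR c d (n + 1) (θ' (j + 1)) = 0)
    {k : ℕ} (hk : k ≤ n + 1) (hθk : θ k ∈ Set.Icc (θ' k) (θ' (k + 1))) {x : ℝ}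
    (hx : x ∈ Set.Ioo (θ' k) (θ' (k + 1))) : 0 < (-1) ^ k * trigR c d (n + 1) x := by
  have hnode := h.node_sign hg hk
  have hno : ∀ y ∈ Set.Ioo (θ' k) (θ' (k + 1)), trigR c d (n + 1) y ≠ 0 := by
    intro y hy hy0
    have hy' : y ∈ Set.Ioo 0 (2 * π) := by
      rw [← h0, ← hlast]
      exact ⟨(hθ'.monotoneOn (by simp) (by simp; omega) (Nat.zero_le k)).trans_lt hy.1,
        hy.2.trans_le (hθ'.monotoneOn (by simp; omega) (by simp) (by omega))⟩
    obtain ⟨i, hi, rfl⟩ := exists_eq_of_trigR_eq_zero c d hθ' h0 hlast hroot hy' hy0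
    have h1 := (hθ'.lt_iff_lt (by simp; omega) (by simp; omega)).1 hy.1
    have h2 := (hθ'.lt_iff_lt (by simp; omega) (by simp; omega)).1 hy.2
    omega
  have hpos := mul_pos_of_forall_ne_zero_Ioo
    (differentiable_trigR c d (n + 1)).continuous.continuousOn hθk hx
    (fun h0 => by simp [h0] at hnode) hno
  have hsq : ((-1 : ℝ) ^ k) * (-1) ^ k = 1 := by rw [← mul_pow]; norm_num
  nlinarith

/-- The zeros of `trigR (n + 1)` found between consecutive nodes, framed by `0` and `2π`, are
again interlacing. -/
theorem exists_succ {g : ℕ → ℝ} (hg : IsParamSeq (fun n => d (n + 1)) g)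
    (h : Interlacing c d n θ) : ∃ θ', Interlacing c d (n + 1) θ' := by
  choose! η hη hηroot using fun j (hj : j ≤ n) => h.exists_root_between hg hj
  set θ' : ℕ → ℝ := fun k => if k = 0 then 0 else if k ≤ n + 1 then η (k - 1) else 2 * π
  have h0 : θ' 0 = 0 := by simp [θ']
  have hsucc : ∀ j ≤ n, θ' (j + 1) = η j := fun j hj => by simp [θ', hj]
  have hlast : θ' (n + 2) = 2 * π := by simp [θ']
  have hθk : ∀ k ≤ n + 1, θ k ∈ Set.Icc (θ' k) (θ' (k + 1)) := by
    intro k hk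
    constructor
    · rcases k with _ | j
      · rw [h0, h.zero]
      · rw [hsucc j (by omega)]; exact (hη j (by omega)).2.le
    · rcases hk.lt_or_eq with hk | rfl
      · rw [hsucc k (by omega)]; exact (hη k (by omega)).1.le
      · rw [hlast, h.last]
  have hlt : ∀ k ≤ n + 1, θ' k < θ' (k + 1) := by
    rintro (_ | j) hj
    · rw [h0, hsucc 0 (by omega), ← h.zero]; exact (hη 0 (by omega)).1
    · rw [hsucc j (by omega)]
      exact (hη j (by omega)).2.trans_le (hθk (j + 1) hj).2
  have hroot : ∀ j < n + 1, trigR c d (n + 1) (θ' (j + 1)) = 0 := fun j hj => by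
    rw [hsucc j (by omega)]
    exact hηroot j (by omega)
  have hθ' : StrictMonoOn θ' (Set.Iic (n + 2)) :=
    strictMonoOn_Iic_of_lt_succ fun k hk => hlt k (Nat.lt_succ_iff.1 hk)
  refine ⟨θ', h0, hlast, hlt, hroot,
    fun k hk x hx => h.sign_succ hg hθ' h0 hlast hroot hk (hθk k hk) hx, fun j hj => ?_⟩
  rw [hsucc j (by omega), add_tsub_cancel_right]
  exact h.sign j (by omega) _ (hη j (by omega))

end Interlacing

variable {c d}

theorem exists_interlacing {g : ℕ → ℝ} (hg : IsParamSeq (fun n => d (n + 1)) g) :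
    ∀ n, ∃ θ, Interlacing c d n θ
  | 0 => ⟨fun j => 2 * π * j, by simp, by simp,
      fun j hj => by simp [Nat.le_zero.1 hj, pi_pos], fun j hj => absurd hj j.not_lt_zero,
      fun j hj x _ => by simp [Nat.le_zero.1 hj, trigR], fun j hj => absurd hj j.not_lt_zero⟩
  | n + 1 => (exists_interlacing hg n).elim fun _ h => h.exists_succ hg

end Zeros

section Weights

open Complex

noncomputable def lambdaHat (c d : ℕ → ℝ) (m : ℕ) (t : ℝ) : ℝ :=
  -(1 + c 1 ^ 2) * (∏ k ∈ Icc 2 (m + 1), 4 * d k) * Real.sin (t / 2) /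
    (trigR c d m t * deriv (trigR c d (m + 1)) t)

variable (c : ℕ → ℝ) {d : ℕ → ℝ}

theorem eval_Ahat_mul (hd1 : d 1 ≠ 0) {m : ℕ} {t : ℝ} (ht : trigR c d (m + 1) t = 0) :
    (Ahat c d (m + 1)).eval (exp (t * I)) *
        ((trigR c d m t * deriv (trigR c d (m + 1)) t : ℝ) : ℂ) =
      ((-(1 + c 1 ^ 2) * (∏ k ∈ Icc 2 (m + 1), 4 * d k) * Real.sin (t / 2) : ℝ) : ℂ) *
        (derivative (Rpoly c d (m + 1))).eval (exp (t * I)) := by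
  have hd1' : (d 1 : ℂ) ≠ 0 := by exact_mod_cast hd1
  have hD := I_mul_exp_mul_derivative_eval_exp c d ht
  set z := exp (t * I)
  set E := exp ((t / 2 : ℝ) * I)
  have hE : E ≠ 0 := exp_ne_zero _
  have hzE : z = E ^ 2 := exp_mul_I_eq_sq t
  have hR : (Rpoly c d (m + 1)).eval z = 0 := by simp [z, eval_exp_Rpoly, ht]
  have hRm : (Rpoly c d m).eval z = E ^ m * trigR c d m t := eval_exp_Rpoly c d t m
  have hz1 : z - 1 = E * (2 * I * Real.sin (t / 2)) := exp_mul_I_sub_one t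
  have hA := congrArg (eval z) (C_two_mul_X_mul_Ahat c hd1 m)
  have hW := congrArg (eval z) (Rpoly_mul_Qpoly_sub_Qpoly_mul_Rpoly c d m)
  simp only [Bpoly, eval_mul, eval_add, eval_sub, eval_C, eval_X, eval_neg, eval_pow,
    hR] at hA hW
  push_cast at hW hz1 ⊢
  set a := (Ahat c d (m + 1)).eval z
  set q := (Qpoly c d (m + 1)).eval z
  set r := (Rpoly c d m).eval z
  set P := ∏ k ∈ Icc 2 (m + 1), 4 * (d k : ℂ)
  set s := sin ((t : ℂ) / 2)
  have h1 : 2 * z * a * r = (1 + (c 1 : ℂ) ^ 2) * (z - 1) * P * z ^ m := by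
    rw [hA]
    field_simp
    linear_combination (-(1 + I * (c 1 : ℂ)) * (1 - I * (c 1 : ℂ)) * (z - 1)) * hW +
      (-(c 1 : ℂ) ^ 2 * (z - 1) * P * z ^ m * 2 * d 1) * I_sq
  have h2 : 2 * z * a * trigR c d m t = (1 + (c 1 : ℂ) ^ 2) * (2 * I * s) * P * E ^ (m + 1) := by
    refine mul_left_cancel₀ (pow_ne_zero m hE) ?_
    rw [hRm, hz1, hzE] at h1
    rw [hzE]
    linear_combination h1
  refine mul_left_cancel₀ (mul_ne_zero two_ne_zero (exp_ne_zero _) : 2 * z ≠ 0) ?_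
  linear_combination ((deriv (trigR c d (m + 1)) t : ℝ) : ℂ) * h2 -
    ((1 + (c 1 : ℂ) ^ 2) * (2 * I * s) * P) * hD +
    (2 * (1 + (c 1 : ℂ) ^ 2) * s * P * z * (derivative (Rpoly c d (m + 1))).eval z) * I_sq

namespace Interlacing

variable {c} {m : ℕ} {θ : ℕ → ℝ}

theorem deriv_ne_zero (h : Interlacing c d (m + 1) θ) (j : Fin (m + 1)) :
    deriv (trigR c d (m + 1)) (θ (j + 1)) ≠ 0 := by
  intro h0
  have hD := I_mul_exp_mul_derivative_eval_exp c d (h.root j j.2)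
  rw [h0, ofReal_zero, mul_zero] at hD
  exact h.eval_derivative_ne_zero j (by simpa [exp_ne_zero] using hD)

/-- `trigR (m + 1)` passes from sign `(-1)^j` to sign `(-1)^(j+1)` at its `j`-th zero, where
`trigR m` has sign `(-1)^j`. -/
theorem trigR_mul_deriv_neg (h : Interlacing c d (m + 1) θ) (j : Fin (m + 1)) :
    trigR c d m (θ (j + 1)) * deriv (trigR c d (m + 1)) (θ (j + 1)) < 0 := by
  set s : ℝ := (-1) ^ (j : ℕ)
  have hprev : 0 < s * trigR c d m (θ (j + 1)) := by simpa using h.sign_prev j j.2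
  have hderiv : s * deriv (trigR c d (m + 1)) (θ (j + 1)) ≤ 0 :=
    HasDerivAt.nonpos_of_pos_left (f := fun x => s * trigR c d (m + 1) x)
      ((differentiable_trigR c d (m + 1) _).hasDerivAt.const_mul s) (by simp [h.root j j.2])
      (h.lt_succ j (by omega)) (h.sign j (by omega))
  have hsD : s * deriv (trigR c d (m + 1)) (θ (j + 1)) < 0 :=
    hderiv.lt_of_ne (mul_ne_zero (pow_ne_zero _ (by norm_num)) (h.deriv_ne_zero j))
  have hsq : s * s = 1 := by rw [← mul_pow]; norm_num
  nlinarith [mul_neg_of_pos_of_neg hprev hsD]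

theorem lambdaHat_pos {g : ℕ → ℝ} (hg : IsParamSeq (fun n => d (n + 1)) g)
    (h : Interlacing c d (m + 1) θ) (j : Fin (m + 1)) : 0 < lambdaHat c d m (θ (j + 1)) := by
  have hprod : 0 < ∏ k ∈ Icc 2 (m + 1), 4 * d k := prod_pos fun k hk => by
    obtain ⟨i, rfl⟩ : ∃ i, k = i + 2 := ⟨k - 2, by simp at hk; omega⟩
    exact mul_pos four_pos (hg.pos i)
  have hsin : 0 < Real.sin (θ (j + 1) / 2) := by
    have ht := h.mem_Ioo j.2
    exact Real.sin_pos_of_pos_of_lt_pi (by linarith [ht.1]) (by linarith [ht.2])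
  refine div_pos_of_neg_of_neg ?_ (h.trigR_mul_deriv_neg j)
  have : 0 < (1 + c 1 ^ 2) * (∏ k ∈ Icc 2 (m + 1), 4 * d k) * Real.sin (θ (j + 1) / 2) := by
    positivity
  linarith

theorem ofReal_lambdaHat (hd1 : d 1 ≠ 0) (h : Interlacing c d (m + 1) θ) (j : Fin (m + 1)) :
    (lambdaHat c d m (θ (j + 1)) : ℂ) =
      (Ahat c d (m + 1)).eval (Complex.exp (θ (j + 1) * Complex.I)) /
        (derivative (Rpoly c d (m + 1))).eval (Complex.exp (θ (j + 1) * Complex.I)) := by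
  have hden : ((trigR c d m (θ (j + 1)) * deriv (trigR c d (m + 1)) (θ (j + 1)) : ℝ) : ℂ) ≠ 0 :=
    Complex.ofReal_ne_zero.2 (h.trigR_mul_deriv_neg j).ne
  rw [eq_div_iff (h.eval_derivative_ne_zero j), lambdaHat, Complex.ofReal_div, div_mul_eq_mul_div,
    div_eq_iff hden, ← eval_Ahat_mul c hd1 (h.root j j.2), mul_comm]

end Interlacing

end Weights

theorem stmt9_general (c d : ℕ → ℝ) (hd1 : d 1 ≠ 0)
    (hd : IsPositiveChainSeq fun n => d (n + 1))
    (n : ℕ) (hn : 1 ≤ n)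
    (z : Fin n → ℂ) (hzinj : Function.Injective z)
    (hzroot : ∀ j, (Rpoly c d n).eval (z j) = 0) :
    ∃ A : Polynomial ℂ,
      C 2 * X * A =
        C (1 + Complex.I * (c 1 : ℂ)) *
          (Rpoly c d n +
            C ((1 - Complex.I * (c 1 : ℂ)) / (2 * (d 1 : ℂ))) * (X - C 1) * Qpoly c d n) ∧
      A.natDegree = n - 1 ∧
      A.leadingCoeff = ∏ k ∈ Finset.Icc 1 n, (1 + Complex.I * (c k : ℂ)) ∧
      ∃ lam : Fin n → ℝ,
        (∀ j, 0 < lam j ∧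
          (lam j : ℂ) = A.eval (z j) / (Polynomial.derivative (Rpoly c d n)).eval (z j)) ∧
        (∑ j, lam j) = 1 ∧
        ∀ w : ℂ, (∀ j, w ≠ z j) →
          A.eval w / (Rpoly c d n).eval w = ∑ j, (lam j : ℂ) / (w - z j) := by
  obtain ⟨m, rfl⟩ : ∃ m, n = m + 1 := ⟨n - 1, by omega⟩
  obtain ⟨g, hg⟩ := hd
  obtain ⟨θ, hθ⟩ := exists_interlacing (c := c) hg (m + 1)
  choose σ hσ using fun k => hθ.exists_eq_exp_of_root (hzroot k)
  have hR : Rpoly c d (m + 1) = C (∏ k ∈ Icc 1 (m + 1), (1 + Complex.I * (c k : ℂ))) *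
      Lagrange.nodal univ z := by
    rw [← leadingCoeff_Rpoly c d]
    exact eq_C_leadingCoeff_mul_nodal hzinj (natDegree_Rpoly c d _) hzroot
  have hAdeg : (Ahat c d (m + 1)).degree < ↑(m + 1) := degree_le_natDegree.trans_lt <| by
    rw [natDegree_Ahat c hd1 m]; exact_mod_cast Nat.lt_succ_self m
  have hlam : ∀ k, (lambdaHat c d m (θ (σ k + 1)) : ℂ) =
      (Ahat c d (m + 1)).eval (z k) / (derivative (Rpoly c d (m + 1))).eval (z k) := fun k => by
    rw [hσ k, hθ.ofReal_lambdaHat hd1]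
  refine ⟨Ahat c d (m + 1), C_two_mul_X_mul_Ahat c hd1 m, by simpa using natDegree_Ahat c hd1 m,
    leadingCoeff_Ahat c hd1 m, fun k => lambdaHat c d m (θ (σ k + 1)),
    fun k => ⟨hθ.lambdaHat_pos hg (σ k), hlam k⟩, ?_, fun w hw => ?_⟩
  · have hsum := sum_eval_div_eval_derivative hzinj hAdeg
      (∏ k ∈ Icc 1 (m + 1), (1 + Complex.I * (c k : ℂ)))
    rw [← hR, add_tsub_cancel_right, coeff_Ahat_self c hd1,
      div_self (prod_ne_zero_iff.2 fun k _ => one_add_I_mul_ne_zero (c k))] at hsum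
    exact_mod_cast (sum_congr rfl fun k _ => hlam k).trans hsum
  · rw [hR, eval_div_eval_eq_sum hzinj hAdeg _ hw, ← hR]
    exact sum_congr rfl fun k _ => by rw [hlam k]

/-- For `n ≥ 1`, `Â_n(z) = ((1 + i c_1)/(2z))[R_n(z) + ((1 - i c_1)/(2 d_1))(z - 1) Q_n(z)]`
is a polynomial of degree `n - 1` with leading coefficient `∏_{k=1}^n (1 + i c_k)`;
with `z_{n,1}, …, z_{n,n}` the simple zeros of `R_n`, the numbers
`λ̂_{n,j} = Â_n(z_{n,j})/R_n'(z_{n,j})` are strictly positive reals summing to `1`, and one has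
the partial fraction decomposition `Â_n(z)/R_n(z) = Σ_j λ̂_{n,j}/(z - z_{n,j})`. -/
theorem stmt9 (c d : ℕ → ℝ) (hd1 : d 1 ≠ 0)
    (hd : IsPositiveChainSeq fun n => d (n + 1))
    (n : ℕ) (hn : 1 ≤ n)
    (z : Fin n → ℂ) (hzinj : Function.Injective z)
    (hzroot : ∀ j, (Rpoly c d n).eval (z j) = 0)
    (hzall : ∀ w : ℂ, (Rpoly c d n).eval w = 0 → ∃ j, w = z j) :
    ∃ A : Polynomial ℂ,
      C 2 * X * A =
        C (1 + Complex.I * (c 1 : ℂ)) *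
          (Rpoly c d n +
            C ((1 - Complex.I * (c 1 : ℂ)) / (2 * (d 1 : ℂ))) * (X - C 1) * Qpoly c d n) ∧
      A.natDegree = n - 1 ∧
      A.leadingCoeff = ∏ k ∈ Finset.Icc 1 n, (1 + Complex.I * (c k : ℂ)) ∧
      ∃ lam : Fin n → ℝ,
        (∀ j, 0 < lam j ∧
          (lam j : ℂ) = A.eval (z j) / (Polynomial.derivative (Rpoly c d n)).eval (z j)) ∧
        (∑ j, lam j) = 1 ∧
        ∀ w : ℂ, (∀ j, w ≠ z j) →
          A.eval w / (Rpoly c d n).eval w = ∑ j, (lam j : ℂ) / (w - z j) :=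
  stmt9_general c d hd1 hd n hn z hzinj hzroot
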